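/- Let Ext₁ : {0,1}^n × {0,1}^{d₁} → {0,1}^{m₁} be a (k₁, ε₁) KL-extractor, let Waste₁ : {0,1}^n × {0,1}^{d₁} → {0,1}^w be such that (x,s) ↦ (Ext₁(x,s), Waste₁(x,s)) is injective, and let Ext₂ : {0,1}^w × {0,1}^{d₂} → {0,1}^{m₂} be a (k₂, ε₂) average-case KL-extractor with k₂ ≤ k₁ + d₁ − m₁. Then Ext((x,(s,t))) = (Ext₁(x,s), Ext₂(Waste₁(x,s), t)) is a (k₁, ε₁ + ε₂) KL-extractor. -/

import Mathlib

open scoped BigOperators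

/-- A probability mass function on a finite set. -/
def IsPMF {X : Type*} [Fintype X] (P : X → ℝ) : Prop :=
  (∀ x, 0 ≤ P x) ∧ ∑ x, P x = 1

/-- KL divergence (in bits) from a distribution on a finite set to uniform. -/
noncomputable def KLuFin {Y : Type*} [Fintype Y] (P : Y → ℝ) : ℝ :=
  ∑ y, P y * Real.logb 2 ((Fintype.card Y : ℝ) * P y)

/-!
The composed extractor samples its output in two stages: first the pair
`(Ext₁(X,S), Waste₁(X,S))`, with joint law `J`, then `Ext₂` on the waste with a fresh seed `T`.
The chain rule for KL divergence splits the error into the divergence of `Ext₁(X,S)`, at most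
`ε₁`, and the average divergence of `Ext₂(Waste₁(X,S), T)` conditioned on `Ext₁(X,S)`, which is
the error of `Ext₂` on the source `J`. As `(x,s) ↦ (Ext₁, Waste₁)` is injective, every atom of
`J` has mass at most `2^(-k₁-d₁)`, so the waste has average min-entropy at least
`k₁ + d₁ - m₁ ≥ k₂` given `Ext₁(X,S)`, and this second term is at most `ε₂`.
-/

open Finset Function

lemma sum_inv_two_pow_eq_one (d : ℕ) : ∑ _s : Fin d → Bool, ((2 : ℝ) ^ d)⁻¹ = 1 := by
  simp

lemma two_pow_mul_rpow_neg_le {m d : ℕ} {k k' : ℝ} (hk : k' ≤ k + d - m) :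
    (2 : ℝ) ^ m * ((2 : ℝ) ^ (-k) * ((2 : ℝ) ^ d)⁻¹) ≤ (2 : ℝ) ^ (-k') := by
  rw [← Real.rpow_natCast, ← Real.rpow_natCast, ← Real.rpow_neg zero_le_two,
    ← Real.rpow_add two_pos, ← Real.rpow_add two_pos]
  exact Real.rpow_le_rpow_of_exponent_le one_le_two (by linarith)

section Pushforward

variable {α Y : Type*} [Fintype α] [DecidableEq Y]

lemma sum_sum_mul_ite_eq [Fintype Y] (μ : α → ℝ) (f : α → Y) :
    ∑ y, ∑ a, μ a * (if f a = y then 1 else 0) = ∑ a, μ a := by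
  rw [sum_comm]
  simp

lemma sum_mul_ite_le_of_injective {f : α → Y} (hf : Injective f) {μ : α → ℝ} {c : ℝ}
    (hc : 0 ≤ c) (hμ : ∀ a, μ a ≤ c) (y : Y) :
    ∑ a, μ a * (if f a = y then 1 else 0) ≤ c := by
  by_cases hy : ∃ a, f a = y
  · obtain ⟨a, rfl⟩ := hy
    rw [Fintype.sum_eq_single a fun b hb => by simp [hf.ne hb]]
    simpa using hμ a
  · simpa [not_exists.mp hy] using hc

end Pushforward

section JointLaw

variable {α S Z W : Type*} [Fintype α] [Fintype S] [DecidableEq Z] [DecidableEq W]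

def jointLaw (μ : α → S → ℝ) (f : α → S → Z) (g : α → S → W) (q : Z × W) : ℝ :=
  ∑ x, ∑ s, μ x s * if f x s = q.1 ∧ g x s = q.2 then 1 else 0

variable {μ : α → S → ℝ} {f : α → S → Z} {g : α → S → W}

lemma jointLaw_eq_sum_prod (q : Z × W) :
    jointLaw μ f g q = ∑ p : α × S, μ p.1 p.2 * if (f p.1 p.2, g p.1 p.2) = q then 1 else 0 := by
  simp only [jointLaw, Fintype.sum_prod_type, Prod.ext_iff]

lemma jointLaw_nonneg (hμ : ∀ x s, 0 ≤ μ x s) (q : Z × W) : 0 ≤ jointLaw μ f g q :=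
  sum_nonneg fun x _ => sum_nonneg fun s _ => by have := hμ x s; positivity

lemma sum_jointLaw [Fintype Z] [Fintype W] : ∑ q, jointLaw μ f g q = ∑ x, ∑ s, μ x s := by
  simp_rw [jointLaw_eq_sum_prod, sum_sum_mul_ite_eq, Fintype.sum_prod_type]

lemma jointLaw_le_of_injective (hfg : Injective fun p : α × S => (f p.1 p.2, g p.1 p.2))
    {c : ℝ} (hc : 0 ≤ c) (hμ : ∀ x s, μ x s ≤ c) (q : Z × W) : jointLaw μ f g q ≤ c := by
  rw [jointLaw_eq_sum_prod]
  exact sum_mul_ite_le_of_injective hfg hc (fun p => hμ p.1 p.2) q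

lemma sum_jointLaw_mk_right [Fintype W] (z : Z) :
    ∑ v, jointLaw μ f g (z, v) = ∑ x, ∑ s, μ x s * if f x s = z then 1 else 0 := by
  unfold jointLaw
  rw [sum_comm]
  refine sum_congr rfl fun x _ => ?_
  rw [sum_comm]
  refine sum_congr rfl fun s _ => ?_
  by_cases h : f x s = z <;> simp [h]

lemma sum_mul_ite_comp_eq_sum_jointLaw {T Y : Type*} [Fintype T] [Fintype W] [DecidableEq Y]
    (c : ℝ) (h : W → T → Y) (z : Z) (y : Y) :
    ∑ x, ∑ s, ∑ t, μ x s * c * (if f x s = z ∧ h (g x s) t = y then 1 else 0)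
      = ∑ v, jointLaw μ f g (z, v) * ∑ t, c * if h v t = y then 1 else 0 := by
  symm
  simp_rw [jointLaw, sum_mul]
  rw [sum_comm]
  refine sum_congr rfl fun x _ => ?_
  rw [sum_comm]
  refine sum_congr rfl fun s _ => ?_
  by_cases hz : f x s = z
  · rw [Fintype.sum_eq_single (g x s) fun v hv => by simp [Ne.symm hv]]
    simp [hz, mul_sum]
  · simp [hz]

end JointLaw

lemma sum_sup'_le_card_mul {Z W : Type*} [Fintype Z] [Fintype W] [Nonempty W]
    {J : Z × W → ℝ} {c : ℝ} (hJ : ∀ q, J q ≤ c) :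
    ∑ z, univ.sup' univ_nonempty (fun v => J (z, v)) ≤ Fintype.card Z * c := by
  simpa using sum_le_sum fun z (_ : z ∈ univ) => sup'_le _ _ fun v _ => hJ (z, v)

lemma mul_logb_mul_mul_eq_add {A B P Q : ℝ} (hA : 0 < A) (hB : 0 < B) (hP : 0 < P)
    (hQ : 0 < Q) :
    P * Real.logb 2 (A * B * P) =
      P * Real.logb 2 (A * Q) + Q * (P / Q * Real.logb 2 (B * (P / Q))) := by
  have hsplit : A * B * P = (A * Q) * (B * (P / Q)) := by field_simp
  rw [hsplit, Real.logb_mul (by positivity) (by positivity)]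
  field_simp

theorem KLuFin_prod {Y₁ Y₂ : Type*} [Fintype Y₁] [Fintype Y₂] (P : Y₁ × Y₂ → ℝ)
    (hP : ∀ p, 0 ≤ P p) :
    KLuFin P = KLuFin (fun a => ∑ b, P (a, b)) +
      ∑ a, (∑ b, P (a, b)) * KLuFin (fun b => P (a, b) / ∑ b', P (a, b')) := by
  unfold KLuFin
  rw [Fintype.sum_prod_type, ← sum_add_distrib]
  refine sum_congr rfl fun a _ => ?_
  rcases (sum_nonneg fun b _ => hP (a, b)).eq_or_lt with hQ | hQ
  · have hzero : ∀ b, P (a, b) = 0 := fun b =>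
      (sum_eq_zero_iff_of_nonneg fun b _ => hP (a, b)).mp hQ.symm b (mem_univ b)
    simp [hzero]
  · beta_reduce
    generalize hQdef : ∑ b, P (a, b) = Q at hQ ⊢
    have : Nonempty Y₁ := ⟨a⟩
    calc _ = ∑ b, (P (a, b) * Real.logb 2 (Fintype.card Y₁ * Q) +
          Q * (P (a, b) / Q * Real.logb 2 (Fintype.card Y₂ * (P (a, b) / Q)))) := by
          refine sum_congr rfl fun b _ => ?_
          rcases (hP (a, b)).eq_or_lt with hPab | hPab
          · simp [← hPab]
          · have : Nonempty Y₂ := ⟨b⟩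
            rw [Fintype.card_prod, Nat.cast_mul]
            exact mul_logb_mul_mul_eq_add (by positivity) (by positivity) hPab hQ
      _ = _ := by rw [sum_add_distrib, ← sum_mul, ← mul_sum, hQdef]

theorem KLuFin_comp {Z W Y : Type*} [Fintype Z] [Fintype W] [Fintype Y] (J : Z × W → ℝ)
    (hJ : ∀ q, 0 ≤ J q) (K : W → Y → ℝ) (hK : ∀ w y, 0 ≤ K w y) (hK₁ : ∀ w, ∑ y, K w y = 1) :
    KLuFin (fun p : Z × Y => ∑ w, J (p.1, w) * K w p.2) =
      KLuFin (fun z => ∑ w, J (z, w)) +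
        ∑ z, (∑ w, J (z, w)) * KLuFin (fun y => ∑ w, (J (z, w) / ∑ w', J (z, w')) * K w y) := by
  have hmarg : ∀ z, ∑ y, ∑ w, J (z, w) * K w y = ∑ w, J (z, w) := fun z => by
    rw [sum_comm]
    simp [← mul_sum, hK₁]
  rw [KLuFin_prod _ fun p => sum_nonneg fun w _ => mul_nonneg (hJ _) (hK _ _)]
  simp only [hmarg, sum_div, mul_div_right_comm]

/-- Re-extraction from leftovers: composing a KL-extractor with an average-case
KL-extractor applied to the "waste" of an injective extractor-condenser pair
yields a KL-extractor with summed error. -/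
theorem kl_reextraction (n d₁ m₁ w d₂ m₂ : ℕ) (k₁ k₂ ε₁ ε₂ : ℝ)
    (Ext₁ : (Fin n → Bool) → (Fin d₁ → Bool) → (Fin m₁ → Bool))
    (Waste₁ : (Fin n → Bool) → (Fin d₁ → Bool) → (Fin w → Bool))
    (Ext₂ : (Fin w → Bool) → (Fin d₂ → Bool) → (Fin m₂ → Bool))
    (hinj : Function.Injective (fun p : (Fin n → Bool) × (Fin d₁ → Bool) =>
      (Ext₁ p.1 p.2, Waste₁ p.1 p.2)))
    (hExt₁ : ∀ X : (Fin n → Bool) → ℝ, IsPMF X →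
      (∀ x, X x ≤ (2 : ℝ) ^ (-k₁)) →
      KLuFin (fun y : Fin m₁ → Bool =>
        ∑ x, ∑ s, X x * ((2 : ℝ) ^ d₁)⁻¹ * (if Ext₁ x s = y then 1 else 0)) ≤ ε₁)
    (hExt₂ : ∀ (ζ : Type) (_ : Fintype ζ),
      ∀ J : ζ × (Fin w → Bool) → ℝ, IsPMF J →
      (∑ z, (Finset.univ.sup' Finset.univ_nonempty fun x => J (z, x))
        ≤ (2 : ℝ) ^ (-k₂)) →
      ∑ z, (∑ x, J (z, x)) * KLuFin (fun y : Fin m₂ → Bool =>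
        ∑ x, ∑ t, (J (z, x) / ∑ x', J (z, x')) * ((2 : ℝ) ^ d₂)⁻¹
          * (if Ext₂ x t = y then 1 else 0)) ≤ ε₂)
    (hk₂ : k₂ ≤ k₁ + d₁ - m₁) :
    ∀ X : (Fin n → Bool) → ℝ, IsPMF X → (∀ x, X x ≤ (2 : ℝ) ^ (-k₁)) →
      KLuFin (fun p : (Fin m₁ → Bool) × (Fin m₂ → Bool) =>
        ∑ x, ∑ s, ∑ t, X x * ((2 : ℝ) ^ d₁)⁻¹ * ((2 : ℝ) ^ d₂)⁻¹ *
          (if Ext₁ x s = p.1 ∧ Ext₂ (Waste₁ x s) t = p.2 then 1 else 0))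
        ≤ ε₁ + ε₂ := by
  intro X hX hXk
  set J := jointLaw (fun x _ => X x * ((2 : ℝ) ^ d₁)⁻¹) Ext₁ Waste₁
  set K : (Fin w → Bool) → (Fin m₂ → Bool) → ℝ := fun v y =>
    ∑ t, ((2 : ℝ) ^ d₂)⁻¹ * if Ext₂ v t = y then 1 else 0
  have hJ_nonneg : ∀ q, 0 ≤ J q := jointLaw_nonneg fun x _ => by have := hX.1 x; positivity
  have hJ_pmf : IsPMF J := ⟨hJ_nonneg, by
    simp_rw [J, sum_jointLaw, ← mul_sum, sum_inv_two_pow_eq_one, mul_one]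
    exact hX.2⟩
  have hJ_entropy : ∑ z, univ.sup' univ_nonempty (fun v => J (z, v)) ≤ (2 : ℝ) ^ (-k₂) := by
    refine (sum_sup'_le_card_mul (jointLaw_le_of_injective hinj (by positivity)
      fun x _ => mul_le_mul_of_nonneg_right (hXk x) (by positivity))).trans ?_
    simpa using two_pow_mul_rpow_neg_le hk₂
  have hK_sum : ∀ v, ∑ y, K v y = 1 := fun v => by
    simp only [K, sum_sum_mul_ite_eq, sum_inv_two_pow_eq_one]
  simp_rw [sum_mul_ite_comp_eq_sum_jointLaw (μ := fun x _ => X x * ((2 : ℝ) ^ d₁)⁻¹)]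
  rw [KLuFin_comp J hJ_nonneg K (fun v y => sum_nonneg fun t _ => by positivity) hK_sum]
  refine add_le_add ?_ ?_
  · simpa only [J, sum_jointLaw_mk_right] using hExt₁ X hX hXk
  · refine (sum_congr rfl fun z _ => ?_).trans_le (hExt₂ _ inferInstance J hJ_pmf hJ_entropy)
    simp only [K, mul_sum, mul_assoc]
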